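/- For a retarded integrand, the ratio of the volume element to the retarded distance is conformally invariant under the conformal special Lorentz transformation: vol'₃/s' = l² · vol₃/s, where s = |r - r₀| and s' = |r' - r'₀| with the primed point obtained by transforming (r, t₀ - s/c). -/

import Mathlib

open Matrix

noncomputable section

/-!
Only the first component of `F` involves the retarded time, while the other two are `l` times
the coordinates, so `JF` is upper triangular with diagonal `lα(1 + (V/c) ∂₁s), l, l`, and
`∂₁s = (x¹ - x₀¹)/s`. For `s'`, the identity `α²(1 - V²/c²) = 1` turns `|F(r) - r'₀|²` into the
perfect square `(lα(s + (V/c)(x¹ - x₀¹)))²`, whose base is positive because `|x¹ - x₀¹| ≤ s`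
and `|V| < c`.
-/

def lorentzFactor (β : ℝ) : ℝ := (√(1 - β ^ 2))⁻¹

theorem one_sub_sq_pos_of_abs_lt_one {β : ℝ} (hβ : |β| < 1) : 0 < 1 - β ^ 2 :=
  sub_pos.mpr ((sq_lt_one_iff_abs_lt_one β).mpr hβ)

theorem lorentzFactor_pos {β : ℝ} (hβ : |β| < 1) : 0 < lorentzFactor β :=
  inv_pos.mpr (Real.sqrt_pos.mpr (one_sub_sq_pos_of_abs_lt_one hβ))

theorem lorentzFactor_sq_mul_one_sub_sq {β : ℝ} (hβ : |β| < 1) :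
    lorentzFactor β ^ 2 * (1 - β ^ 2) = 1 := by
  have h := one_sub_sq_pos_of_abs_lt_one hβ
  rw [lorentzFactor, inv_pow, Real.sq_sqrt h.le, inv_mul_cancel₀ h.ne']

section Distance

variable {ι : Type*} [Fintype ι] {x a : ι → ℝ}

theorem sum_sq_sub_pos_of_ne (h : x ≠ a) : 0 < ∑ i, (x i - a i) ^ 2 := by
  obtain ⟨i, hi⟩ := Function.ne_iff.mp h
  exact Finset.sum_pos' (fun j _ => sq_nonneg _)
    ⟨i, Finset.mem_univ i, sq_pos_of_ne_zero (sub_ne_zero.mpr hi)⟩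

theorem abs_sub_le_sqrt_sum_sq_sub (k : ι) : |x k - a k| ≤ √(∑ i, (x i - a i) ^ 2) :=
  Real.abs_le_sqrt (Finset.single_le_sum (fun i _ => sq_nonneg (x i - a i)) (Finset.mem_univ k))

theorem hasFDerivAt_sqrt_sum_sq_sub (h : x ≠ a) :
    HasFDerivAt (fun y : ι → ℝ => √(∑ i, (y i - a i) ^ 2))
      (∑ i, ((x i - a i) / √(∑ i, (x i - a i) ^ 2)) •
        (ContinuousLinearMap.proj i : (ι → ℝ) →L[ℝ] ℝ)) x := by
  have hsum : HasFDerivAt (fun y : ι → ℝ => ∑ i, (y i - a i) ^ 2)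
      (∑ i, (2 * (x i - a i)) • (ContinuousLinearMap.proj i : (ι → ℝ) →L[ℝ] ℝ)) x := by
    refine HasFDerivAt.fun_sum fun i _ => ?_
    simpa using ((hasFDerivAt_apply i x).sub_const (a i)).pow 2
  refine ((Real.hasDerivAt_sqrt (sum_sq_sub_pos_of_ne h).ne').comp_hasFDerivAt x
    hsum).congr_fderiv ?_
  ext v
  simp only [_root_.smul_apply, _root_.sum_apply, ContinuousLinearMap.proj_apply, smul_eq_mul,
    Finset.mul_sum]
  refine Finset.sum_congr rfl fun i _ => ?_
  field_simp

variable [DecidableEq ι]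

theorem fderiv_const_mul_apply_single (l : ℝ) (k j : ι) (r : ι → ℝ) :
    fderiv ℝ (fun x : ι → ℝ => l * x k) r (Pi.single j 1) = l * (Pi.single j 1 : ι → ℝ) k := by
  rw [((hasFDerivAt_apply k r).const_mul l).fderiv]
  rfl

theorem fderiv_retarded_coord_single_self (h : x ≠ a) (k V t₀ c : ℝ) (i₀ : ι) :
    fderiv ℝ (fun y : ι → ℝ => k * (y i₀ - V * (t₀ - √(∑ i, (y i - a i) ^ 2) / c))) x
        (Pi.single i₀ 1) =
      k * (1 + V / c * (x i₀ - a i₀) / √(∑ i, (x i - a i) ^ 2)) := by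
  have hd := ((hasFDerivAt_apply i₀ x).fun_sub
    ((((hasFDerivAt_sqrt_sum_sq_sub h).mul_const c⁻¹).const_sub t₀).const_mul V)).const_mul k
  simp only [div_eq_mul_inv _ c]
  rw [hd.fderiv]
  simp only [smul_neg, sub_neg_eq_add, smul_add, _root_.add_apply, _root_.smul_apply,
    ContinuousLinearMap.proj_apply, Pi.single_eq_same, smul_eq_mul, mul_one, _root_.sum_apply,
    Pi.single_apply, mul_ite, mul_zero, Finset.sum_ite_eq', Finset.mem_univ, ↓reduceIte]
  ring

def jacobian (G : (ι → ℝ) → ι → ℝ) (r : ι → ℝ) : Matrix ι ι ℝ :=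
  Matrix.of fun i j => fderiv ℝ (fun x => G x i) r (Pi.single j 1)

end Distance

theorem det_jacobian_of_scaled_tail (g : (Fin 3 → ℝ) → ℝ) (l : ℝ) (r : Fin 3 → ℝ) :
    (jacobian (fun x => ![g x, l * x 1, l * x 2]) r).det =
      l ^ 2 * fderiv ℝ g r (Pi.single 0 1) := by
  rw [det_fin_three]
  simp only [jacobian, of_apply, cons_val_zero, cons_val_one, cons_val,
    fderiv_const_mul_apply_single, Pi.single_eq_same, ne_eq, Fin.reduceEq, not_false_eq_true,
    Pi.single_eq_of_ne, mul_one, mul_zero, sub_zero, zero_mul, add_zero]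
  ring

theorem add_mul_pos_of_abs_lt_one {β x s : ℝ} (hβ : |β| < 1) (hx : |x| ≤ s) (hs : 0 < s) :
    0 < s + β * x := by
  have : |β * x| < s := by
    rw [abs_mul]
    calc |β| * |x| ≤ |β| * s := by gcongr
      _ < 1 * s := by gcongr
      _ = s := one_mul s
  linarith [neg_abs_le (β * x)]

theorem sqrt_retarded_sum_sq {k α β s x y z : ℝ} (hk : 0 ≤ k) (hα₀ : 0 ≤ α)
    (hα : α ^ 2 * (1 - β ^ 2) = 1) (hpos : 0 ≤ s + β * x) (hs : s ^ 2 = x ^ 2 + y ^ 2 + z ^ 2) :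
    √((k * α * (x + β * s)) ^ 2 + (k * y) ^ 2 + (k * z) ^ 2) = k * α * (s + β * x) := by
  rw [← Real.sqrt_sq (by positivity : 0 ≤ k * α * (s + β * x))]
  congr 1
  linear_combination k ^ 2 * (x ^ 2 - s ^ 2) * hα - k ^ 2 * hs

theorem retarded_volume_element_conformal_general
    (c V l α : ℝ) (hV : |V| < c) (hl : 0 < l)
    (hα : α = (Real.sqrt (1 - V ^ 2 / c ^ 2))⁻¹)
    (r₀ : Fin 3 → ℝ) (t₀ : ℝ)
    (s : (Fin 3 → ℝ) → ℝ) (hs : ∀ r, s r = Real.sqrt (∑ i, (r i - r₀ i) ^ 2))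
    (F : (Fin 3 → ℝ) → Fin 3 → ℝ)
    (hF : ∀ r, F r = ![l * α * (r 0 - V * (t₀ - s r / c)), l * r 1, l * r 2])
    (r₀' : Fin 3 → ℝ)
    (hr₀' : r₀' = ![l * α * (r₀ 0 - V * t₀), l * r₀ 1, l * r₀ 2])
    (s' : (Fin 3 → ℝ) → ℝ)
    (hs' : ∀ r, s' r = Real.sqrt (∑ i, (F r i - r₀' i) ^ 2)) :
    ∀ r : Fin 3 → ℝ, r ≠ r₀ →
      (Matrix.of fun i j : Fin 3 =>
          fderiv ℝ (fun x => F x i) r (Pi.single j 1)).det =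
        l ^ 3 * α * (1 + V / c * (r 0 - r₀ 0) / s r) ∧
      s' r = l * α * s r * (1 + V / c * (r 0 - r₀ 0) / s r) ∧
      (Matrix.of fun i j : Fin 3 =>
          fderiv ℝ (fun x => F x i) r (Pi.single j 1)).det / s' r =
        l ^ 2 / s r := by
  intro r hr
  simp only [← jacobian.eq_def]
  have hc : 0 < c := (abs_nonneg V).trans_lt hV
  have hβ : |V / c| < 1 := by rwa [abs_div, abs_of_pos hc, div_lt_one hc]
  have hα' : α = lorentzFactor (V / c) := by rw [hα, lorentzFactor, div_pow]
  have hαpos : 0 < α := hα' ▸ lorentzFactor_pos hβ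
  have hSpos : 0 < s r := hs r ▸ Real.sqrt_pos.mpr (sum_sq_sub_pos_of_ne hr)
  have hs_sq : s r ^ 2 = (r 0 - r₀ 0) ^ 2 + (r 1 - r₀ 1) ^ 2 + (r 2 - r₀ 2) ^ 2 := by
    rw [hs, Real.sq_sqrt (by positivity), Fin.sum_univ_three]
  have hpos : 0 < s r + V / c * (r 0 - r₀ 0) :=
    add_mul_pos_of_abs_lt_one hβ (hs r ▸ abs_sub_le_sqrt_sum_sq_sub 0) hSpos
  have hdet : (jacobian F r).det = l ^ 3 * α * (1 + V / c * (r 0 - r₀ 0) / s r) := by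
    have hF' : F = fun x => ![l * α * (x 0 - V * (t₀ - √(∑ i, (x i - r₀ i) ^ 2) / c)), l * x 1,
        l * x 2] := funext fun x => by rw [hF, hs]
    rw [hF', det_jacobian_of_scaled_tail, fderiv_retarded_coord_single_self hr, ← hs]
    ring
  have hs'r : s' r = l * α * (s r + V / c * (r 0 - r₀ 0)) := by
    rw [← sqrt_retarded_sum_sq hl.le hαpos.le (hα' ▸ lorentzFactor_sq_mul_one_sub_sq hβ) hpos.le
      hs_sq, hs', Fin.sum_univ_three, hF, hr₀']
    simp only [cons_val_zero, cons_val_one, cons_val_two, tail_cons, head_cons]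
    congr 1
    ring
  replace hs'r : s' r = l * α * s r * (1 + V / c * (r 0 - r₀ 0) / s r) := by
    rw [hs'r]
    field_simp
  refine ⟨hdet, hs'r, ?_⟩
  have hq : 1 + V / c * (r 0 - r₀ 0) / s r ≠ 0 := by
    rw [one_add_div hSpos.ne']
    exact (div_pos hpos hSpos).ne'
  rw [hdet, hs'r, mul_div_mul_right _ _ hq]
  field_simp

/-- For a retarded integrand, the ratio of the volume element to the
retarded distance is conformally invariant under the conformal special Lorentz
transformation: with `F` mapping `r` to the spatial part of the image of the retarded
event `(r, t₀ - s/c)`, `s = |r - r₀|`, one has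
(i) `det JF = l³α(1 + (V/c)(x¹ - x₀¹)/s)`,
(ii) `s' = |F(r) - r'₀| = lαs(1 + (V/c)(x¹ - x₀¹)/s)`,
(iii) hence `det JF / s' = l²/s`. -/
theorem retarded_volume_element_conformal
    (c V l α : ℝ) (hc : 0 < c) (hV : |V| < c) (hl : 0 < l)
    (hα : α = (Real.sqrt (1 - V ^ 2 / c ^ 2))⁻¹)
    (r₀ : Fin 3 → ℝ) (t₀ : ℝ)
    (s : (Fin 3 → ℝ) → ℝ) (hs : ∀ r, s r = Real.sqrt (∑ i, (r i - r₀ i) ^ 2))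
    (F : (Fin 3 → ℝ) → Fin 3 → ℝ)
    (hF : ∀ r, F r = ![l * α * (r 0 - V * (t₀ - s r / c)), l * r 1, l * r 2])
    (r₀' : Fin 3 → ℝ)
    (hr₀' : r₀' = ![l * α * (r₀ 0 - V * t₀), l * r₀ 1, l * r₀ 2])
    (s' : (Fin 3 → ℝ) → ℝ)
    (hs' : ∀ r, s' r = Real.sqrt (∑ i, (F r i - r₀' i) ^ 2)) :
    ∀ r : Fin 3 → ℝ, r ≠ r₀ →
      (Matrix.of fun i j : Fin 3 =>
          fderiv ℝ (fun x => F x i) r (Pi.single j 1)).det =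
        l ^ 3 * α * (1 + V / c * (r 0 - r₀ 0) / s r) ∧
      s' r = l * α * s r * (1 + V / c * (r 0 - r₀ 0) / s r) ∧
      (Matrix.of fun i j : Fin 3 =>
          fderiv ℝ (fun x => F x i) r (Pi.single j 1)).det / s' r =
        l ^ 2 / s r :=
  retarded_volume_element_conformal_general c V l α hV hl hα r₀ t₀ s hs F hF r₀' hr₀' s' hs'

end
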